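/- arXiv:math/0610358 — 5 statements merged into one kernel-verified Lean document; each statement's English description precedes it below -/
import Mathlib

section
/- Let r be a positive integer and let f : ℕ+ → ℂ be an r-even function. Then the mean value M(f) exists and equals (1/r) Σ_{e | r} f(e) φ(r/e), the sum being over the positive divisors e of r. -/
/-!
An `r`-even function agrees on the positive integers with the `r`-periodic function
`n ↦ f (gcd n r)`. The partial sums of an `r`-periodic function up to `N` are `N / r` times its
sum over one period plus an error depending only on `N % r`, so its mean value is the average
over a period. Grouping `k < r` by `e = gcd k r`, a class of size `φ (r / e)`, turns that
period sum into `∑_{e ∣ r} f e * φ (r / e)`.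
-/

open Finset Filter Topology

/-- The mean value of `f` over positive integers up to `x`, as `x → ∞`. -/
def HasMeanValue (f : ℕ → ℂ) (M : ℂ) : Prop :=
  Tendsto (fun x : ℝ => (∑ n ∈ Finset.Icc 1 ⌊x⌋₊, f n) / (x : ℂ)) atTop (𝓝 M)

open Function

theorem HasMeanValue.of_tendsto_nat {f : ℕ → ℂ} {M : ℂ}
    (hf : Tendsto (fun N : ℕ => (∑ n ∈ Icc 1 N, f n) / N) atTop (𝓝 M)) :
    HasMeanValue f M := by
  have hfloor : Tendsto (fun x : ℝ => ((⌊x⌋₊ / x : ℝ) : ℂ)) atTop (𝓝 1) :=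
    Complex.ofReal_one ▸ (Complex.continuous_ofReal.tendsto 1).comp tendsto_nat_floor_div_atTop
  have hlim := (hf.comp tendsto_nat_floor_atTop).mul hfloor
  rw [mul_one] at hlim
  refine hlim.congr' ?_
  filter_upwards [eventually_ge_atTop 1] with x hx
  have : (⌊x⌋₊ : ℂ) ≠ 0 := by exact_mod_cast (Nat.floor_pos.2 hx).ne'
  simp only [Function.comp_apply, Complex.ofReal_div, Complex.ofReal_natCast]
  field_simp

theorem HasMeanValue.congr_pos {f g : ℕ → ℂ} {M : ℂ} (hf : HasMeanValue f M)
    (hfg : ∀ n, 0 < n → f n = g n) : HasMeanValue g M := by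
  refine hf.congr fun x => ?_
  rw [sum_congr rfl fun n hn => hfg n (mem_Icc.1 hn).1]

theorem sum_Icc_one_eq_sum_range_add_one {M : Type*} [AddCommMonoid M] (g : ℕ → M) (N : ℕ) :
    ∑ n ∈ Icc 1 N, g n = ∑ k ∈ range N, g (k + 1) := by
  rw [← Ico_add_one_right_eq_Icc, sum_Ico_eq_sum_range, Nat.add_sub_cancel]
  simp_rw [add_comm 1]

theorem sum_range_comp_gcd {R : Type*} [Semiring R] (f : ℕ → R) (r : ℕ) :
    ∑ k ∈ range r, f (k.gcd r) = ∑ e ∈ r.divisors, f e * (Nat.totient (r / e) : R) := by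
  rcases Nat.eq_zero_or_pos r with rfl | hr
  · simp
  have hmaps : ∀ k ∈ range r, r.gcd k ∈ r.divisors := fun k _ =>
    Nat.mem_divisors.2 ⟨Nat.gcd_dvd_left _ _, hr.ne'⟩
  rw [← sum_fiberwise_of_maps_to hmaps]
  refine sum_congr rfl fun e he => ?_
  rw [Nat.totient_div_of_dvd (Nat.dvd_of_mem_divisors he), ← nsmul_eq_mul', ← sum_const]
  exact sum_congr rfl fun k hk => by rw [Nat.gcd_comm, (mem_filter.1 hk).2]

namespace Function.Periodic

section AddCommMonoid

variable {M : Type*} [AddCommMonoid M] {g : ℕ → M} {r : ℕ}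

theorem sum_range_mul (hg : Periodic g r) (q : ℕ) :
    ∑ k ∈ range (q * r), g k = q • ∑ k ∈ range r, g k := by
  induction q with
  | zero => simp
  | succ q ih =>
    rw [add_mul, one_mul, sum_range_add, ih, succ_nsmul]
    exact congrArg _ (sum_congr rfl fun k _ => by rw [add_comm]; exact hg.nat_mul q k)

theorem sum_range_eq_div_nsmul_add (hg : Periodic g r) (N : ℕ) :
    ∑ k ∈ range N, g k = (N / r) • ∑ k ∈ range r, g k + ∑ k ∈ range (N % r), g k := by
  conv_lhs => rw [← Nat.div_add_mod' N r]
  rw [sum_range_add, hg.sum_range_mul]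
  exact congrArg _ (sum_congr rfl fun k _ => by rw [add_comm]; exact hg.nat_mul _ k)

theorem sum_range_add_one (hg : Periodic g r) :
    ∑ k ∈ range r, g (k + 1) = ∑ k ∈ range r, g k := by
  cases r with
  | zero => simp
  | succ s => rw [sum_range_succ, sum_range_succ', ← zero_add (s + 1), hg 0]

end AddCommMonoid

variable {g : ℕ → ℂ} {r : ℕ}

theorem tendsto_sum_range_div (hg : Periodic g r) (hr : 0 < r) :
    Tendsto (fun N : ℕ => (∑ k ∈ range N, g k) / N) atTop (𝓝 ((∑ k ∈ range r, g k) / r)) := by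
  set S := ∑ k ∈ range r, g k
  set E : ℕ → ℂ := fun s => ∑ k ∈ range s, g k - s * (S / r)
  have hsum : ∀ N, ∑ k ∈ range N, g k = N * (S / r) + E (N % r) := by
    intro N
    have hN : (N : ℂ) = (N / r : ℕ) * r + (N % r : ℕ) := by
      exact_mod_cast (Nat.div_add_mod' N r).symm
    have hr' : (r : ℂ) ≠ 0 := by exact_mod_cast hr.ne'
    rw [hg.sum_range_eq_div_nsmul_add N, nsmul_eq_mul, hN]
    simp only [E, S]
    field_simp
    ring
  have hE : IsBoundedUnder (· ≤ ·) atTop (norm ∘ fun N => E (N % r)) :=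
    isBoundedUnder_of ⟨∑ s ∈ range r, ‖E s‖, fun N =>
      single_le_sum (fun s _ => norm_nonneg (E s)) (mem_range.2 (N.mod_lt hr))⟩
  have hlim := tendsto_const_nhds (x := S / r) |>.add
    (tendsto_inv_atTop_nhds_zero_nat.zero_mul_isBoundedUnder_le hE)
  rw [add_zero] at hlim
  refine hlim.congr' ?_
  filter_upwards [eventually_ne_atTop 0] with N hN
  have hN' : (N : ℂ) ≠ 0 := by exact_mod_cast hN
  rw [hsum N]
  field_simp

theorem hasMeanValue (hg : Periodic g r) (hr : 0 < r) :
    HasMeanValue g ((∑ k ∈ range r, g k) / r) := by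
  refine .of_tendsto_nat ?_
  simp_rw [sum_Icc_one_eq_sum_range_add_one, ← hg.sum_range_add_one]
  exact (hg.add_const 1).tendsto_sum_range_div hr

end Function.Periodic

/-- For `r ≥ 1` and an `r`-even function `f`, the mean value of `f` exists and equals
`(1/r) ∑_{e ∣ r} f(e) φ(r/e)`. -/
theorem meanValue_of_even (r : ℕ) (hr : 0 < r) (f : ℕ → ℂ)
    (hf : ∀ n : ℕ, 0 < n → f n = f (Nat.gcd n r)) :
    HasMeanValue f ((1 / (r : ℂ)) * ∑ e ∈ r.divisors, f e * (Nat.totient (r / e) : ℂ)) := by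
  have hperiodic : Periodic (fun n => f (n.gcd r)) r := fun n =>
    congrArg f (Nat.gcd_add_self_left r n)
  have hmean := hperiodic.hasMeanValue hr
  rw [sum_range_comp_gcd, ← one_div_mul_eq_div] at hmean
  exact hmean.congr_pos fun n hn => (hf n hn).symm
end

section
/- Let r be a positive integer and let f : ℕ+ → ℂ be an r-even function. Then for every positive integer n, f(n) = Σ_{q | r} h(q) c(n,q), where for each positive divisor q of r the coefficient is h(q) = (1/(r φ(q))) Σ_{e | r} φ(e) f(r/e) c(r/e, q). -/
open Finset

/-- The Ramanujan sum `c(n,r) = ∑_{1 ≤ k ≤ r, gcd(k,r)=1} exp(2πikn/r)`. -/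
noncomputable def ramanujanSum (n r : ℕ) : ℂ :=
  ∑ k ∈ (Finset.Icc 1 r).filter (fun k => Nat.gcd k r = 1),
    Complex.exp (2 * Real.pi * Complex.I * k * n / r)

/-!
For `q, q' ∣ r` the Ramanujan sums are orthogonal on `[1, r]`:
`∑_{a=1}^r c(a,q) c(a,q') = r φ(q) [q = q']`, which follows by expanding `c(a,q)` and the
conjugate of the real number `c(a,q')` into exponentials. Since `c(a,q)` only depends on
`gcd(a,r)` (Möbius formula `c(n,q) = ∑_{d ∣ (n,q)} μ(q/d) d`), grouping `a` by `r / gcd(a,r)`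
turns orthogonality into `A B = 1` for the square matrices `A_{q e} = c(r/e, q)` and
`B_{e q} = φ(e) c(r/e, q) / (r φ(q))` indexed by the divisors of `r`. Hence also `B A = 1`,
and applying this to the column `e₀ = r / gcd(n,r)` gives the expansion of an `r`-even `f`.
-/

open Complex ComplexConjugate
open scoped Nat

lemma sum_Icc_pow_eq_ite {K : Type*} [Field K] [DecidableEq K] {z : K} {m : ℕ}
    (hz : z ^ m = 1) : ∑ a ∈ Icc 1 m, z ^ a = if z = 1 then (m : K) else 0 := by
  split_ifs with h1
  · simp [h1]
  · have hshift : ∑ a ∈ Icc 1 m, z ^ a = z * ∑ a ∈ range m, z ^ a := by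
      rw [mul_sum, ← Finset.Ico_add_one_right_eq_Icc, sum_Ico_eq_sum_range]
      simp [pow_add]
    rw [hshift, geom_sum_eq h1, hz, sub_self, zero_div, mul_zero]

theorem Finset.sum_mul_eq_ite_of_sum_mul_eq_ite {ι R : Type*} [DecidableEq ι] [Ring R]
    [IsStablyFiniteRing R] {s : Finset ι} {A B : ι → ι → R}
    (h : ∀ i ∈ s, ∀ k ∈ s, ∑ j ∈ s, A i j * B j k = if i = k then 1 else 0) :
    ∀ i ∈ s, ∀ k ∈ s, ∑ j ∈ s, B i j * A j k = if i = k then 1 else 0 := by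
  let A' : Matrix s s R := Matrix.of fun i j => A i j
  let B' : Matrix s s R := Matrix.of fun i j => B i j
  have hAB : A' * B' = 1 := by
    ext i k
    convert h i i.2 k k.2 using 1
    · exact sum_coe_sort s (fun j => A i j * B j k)
    · rw [Matrix.one_apply]
      exact if_congr Subtype.ext_iff rfl rfl
  have hBA : B' * A' = 1 := mul_eq_one_comm.mp hAB
  intro i hi k hk
  convert congr_fun₂ hBA ⟨i, hi⟩ ⟨k, hk⟩ using 1
  · exact (sum_coe_sort s (fun j => B i j * A j k)).symm
  · rw [Matrix.one_apply]
    exact if_congr Subtype.mk_eq_mk.symm rfl rfl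

noncomputable def expTwoPiI (x : ℂ) : ℂ := exp (2 * Real.pi * I * x)

lemma expTwoPiI_add (x y : ℂ) : expTwoPiI (x + y) = expTwoPiI x * expTwoPiI y := by
  rw [expTwoPiI, expTwoPiI, expTwoPiI, ← exp_add, mul_add]

lemma expTwoPiI_natCast_mul (k : ℕ) (x : ℂ) : expTwoPiI (k * x) = expTwoPiI x ^ k := by
  rw [expTwoPiI, expTwoPiI, ← exp_nat_mul]
  ring_nf

lemma expTwoPiI_eq_one_iff (x : ℂ) : expTwoPiI x = 1 ↔ ∃ n : ℤ, x = n := by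
  have h2πi : 2 * Real.pi * I ≠ 0 := by simp [Real.pi_ne_zero, I_ne_zero]
  simp only [expTwoPiI, exp_eq_one_iff]
  refine exists_congr fun n => ?_
  rw [mul_comm (n : ℂ), mul_right_inj' h2πi]

lemma expTwoPiI_intCast_div_eq_one_iff (n : ℤ) {q : ℕ} (hq : q ≠ 0) :
    expTwoPiI (n / q) = 1 ↔ (q : ℤ) ∣ n := by
  have hq' : (q : ℂ) ≠ 0 := Nat.cast_ne_zero.mpr hq
  rw [expTwoPiI_eq_one_iff]
  refine exists_congr fun m => ?_
  rw [div_eq_iff hq', mul_comm, ← Int.cast_natCast, ← Int.cast_mul, Int.cast_inj, eq_comm]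

lemma conj_expTwoPiI_ofReal (x : ℝ) : conj (expTwoPiI x) = expTwoPiI (-x) := by
  rw [expTwoPiI, expTwoPiI, ← exp_conj]
  simp only [map_mul, map_ofNat, conj_ofReal, conj_I]
  ring_nf

lemma sum_Icc_expTwoPiI_natCast_mul {r : ℕ} {x : ℂ} (hx : expTwoPiI (r * x) = 1) :
    ∑ a ∈ Icc 1 r, expTwoPiI (a * x) = if expTwoPiI x = 1 then (r : ℂ) else 0 := by
  simp_rw [expTwoPiI_natCast_mul] at hx ⊢
  exact sum_Icc_pow_eq_ite hx

lemma sum_Icc_expTwoPiI_mul_div (n : ℕ) {q : ℕ} (hq : q ≠ 0) :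
    ∑ k ∈ Icc 1 q, expTwoPiI (k * n / q) = if q ∣ n then (q : ℂ) else 0 := by
  have hq' : (q : ℂ) ≠ 0 := Nat.cast_ne_zero.mpr hq
  have hn : expTwoPiI ((n : ℤ) / q) = 1 ↔ q ∣ n := by
    rw [expTwoPiI_intCast_div_eq_one_iff n hq, Int.natCast_dvd_natCast]
  push_cast at hn
  have hqn : expTwoPiI (q * (n / q)) = 1 := by
    rw [mul_div_cancel₀ _ hq', expTwoPiI_eq_one_iff]
    exact ⟨n, by simp⟩
  simp_rw [mul_div_assoc]
  rw [sum_Icc_expTwoPiI_natCast_mul hqn, if_congr hn rfl rfl]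

def reducedResidues (q : ℕ) : Finset ℕ := {k ∈ Icc 1 q | Nat.gcd k q = 1}

lemma card_reducedResidues (q : ℕ) : #(reducedResidues q) = φ q := by
  rw [← Nat.filter_coprime_Ico_eq_totient q 1, reducedResidues, add_comm]
  simp only [Nat.coprime_comm (m := q), Nat.Coprime]
  rfl

lemma ne_zero_of_mem_reducedResidues {k q : ℕ} (hk : k ∈ reducedResidues q) : q ≠ 0 := by
  simp only [reducedResidues, mem_filter, mem_Icc] at hk
  omega

lemma Nat.gcd_mul_eq_self_iff_coprime_div {j d q : ℕ} (hd : d ∣ q) (hd0 : d ≠ 0) :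
    Nat.gcd (j * d) q = d ↔ Nat.Coprime j (q / d) := by
  conv_lhs => rw [← Nat.div_mul_cancel hd, Nat.gcd_mul_right]
  simp [Nat.Coprime, hd0]

lemma mul_right_mem_Icc_one_iff {j d q : ℕ} (hd0 : d ≠ 0) :
    j * d ∈ Icc 1 q ↔ j ∈ Icc 1 (q / d) := by
  simp [Nat.one_le_iff_ne_zero, hd0, Nat.le_div_iff_mul_le (Nat.pos_of_ne_zero hd0)]

lemma mul_right_mem_filter_gcd_eq_iff {j d q : ℕ} (hd : d ∣ q) (hd0 : d ≠ 0) :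
    j * d ∈ {k ∈ Icc 1 q | Nat.gcd k q = d} ↔ j ∈ reducedResidues (q / d) := by
  rw [mem_filter, reducedResidues, mem_filter, mul_right_mem_Icc_one_iff hd0,
    Nat.gcd_mul_eq_self_iff_coprime_div hd hd0, Nat.Coprime]

lemma sum_Icc_eq_sum_divisors_sum_reducedResidues {M : Type*} [AddCommMonoid M] (q : ℕ)
    (G : ℕ → M) :
    ∑ k ∈ Icc 1 q, G k = ∑ d ∈ q.divisors, ∑ j ∈ reducedResidues (q / d), G (j * d) := by
  have hgcd : ∀ k ∈ Icc 1 q, Nat.gcd k q ∈ q.divisors := fun k hk =>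
    Nat.mem_divisors.mpr ⟨Nat.gcd_dvd_right k q, by simp at hk; omega⟩
  rw [← sum_fiberwise_of_maps_to hgcd]
  refine sum_congr rfl fun d hd => ?_
  have hdq := Nat.dvd_of_mem_divisors hd
  have hd0 := (Nat.pos_of_mem_divisors hd).ne'
  have hdvd : ∀ k ∈ {k ∈ Icc 1 q | Nat.gcd k q = d}, k / d * d = k := fun k hk =>
    Nat.div_mul_cancel ((mem_filter.mp hk).2 ▸ Nat.gcd_dvd_left k q)
  exact (sum_nbij' (· * d) (· / d) (fun j hj => (mul_right_mem_filter_gcd_eq_iff hdq hd0).mpr hj)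
    (fun k hk => (mul_right_mem_filter_gcd_eq_iff hdq hd0).mp (by rwa [hdvd k hk]))
    (fun j _ => Nat.mul_div_cancel j (Nat.pos_of_ne_zero hd0)) hdvd (fun _ _ => rfl)).symm

lemma sum_Icc_comp_gcd {M : Type*} [AddCommMonoid M] (r : ℕ) (F : ℕ → M) :
    ∑ a ∈ Icc 1 r, F (Nat.gcd a r) = ∑ e ∈ r.divisors, φ e • F (r / e) := by
  rw [sum_Icc_eq_sum_divisors_sum_reducedResidues,
    ← Nat.sum_div_divisors r (fun e => φ e • F (r / e))]
  refine sum_congr rfl fun d hd => ?_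
  have hdr := Nat.dvd_of_mem_divisors hd
  have hd0 := (Nat.pos_of_mem_divisors hd).ne'
  have hgcd : ∀ j ∈ reducedResidues (r / d), F (Nat.gcd (j * d) r) = F d := fun j hj => by
    rw [(Nat.gcd_mul_eq_self_iff_coprime_div hdr hd0).mpr (mem_filter.mp hj).2]
  rw [sum_congr rfl hgcd, sum_const, card_reducedResidues,
    Nat.div_div_self hdr (Nat.ne_zero_of_mem_divisors hd)]

lemma ramanujanSum_eq_sum_expTwoPiI (n q : ℕ) :
    ramanujanSum n q = ∑ k ∈ reducedResidues q, expTwoPiI (k * n / q) := by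
  refine sum_congr rfl fun k _ => ?_
  rw [expTwoPiI]
  ring_nf

lemma sum_divisors_ramanujanSum (n : ℕ) {q : ℕ} (hq : q ≠ 0) :
    ∑ d ∈ q.divisors, ramanujanSum n d = if q ∣ n then (q : ℂ) else 0 := by
  rw [← sum_Icc_expTwoPiI_mul_div n hq, sum_Icc_eq_sum_divisors_sum_reducedResidues,
    ← Nat.sum_div_divisors q]
  refine sum_congr rfl fun d hd => ?_
  have hd0 : (d : ℂ) ≠ 0 := Nat.cast_ne_zero.mpr (Nat.pos_of_mem_divisors hd).ne'
  rw [ramanujanSum_eq_sum_expTwoPiI]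
  refine sum_congr rfl fun j _ => ?_
  rw [Nat.cast_div (Nat.dvd_of_mem_divisors hd) hd0]
  push_cast
  field_simp

open scoped ArithmeticFunction.Moebius in
lemma ramanujanSum_eq_sum_moebius (n q : ℕ) :
    ramanujanSum n q =
      ∑ x ∈ q.divisorsAntidiagonal, μ x.1 • if x.2 ∣ n then (x.2 : ℂ) else 0 := by
  rcases Nat.eq_zero_or_pos q with rfl | hq
  · simp [ramanujanSum]
  exact (ArithmeticFunction.sum_eq_iff_sum_smul_moebius_eq.mp
    (fun m hm => sum_divisors_ramanujanSum n hm.ne') q hq).symm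

lemma ramanujanSum_congr {n m q : ℕ} (h : ∀ b, b ∣ q → (b ∣ n ↔ b ∣ m)) :
    ramanujanSum n q = ramanujanSum m q := by
  simp_rw [ramanujanSum_eq_sum_moebius]
  refine sum_congr rfl fun x hx => ?_
  rw [if_congr (h x.2 (Nat.dvd_of_mem_divisors (Nat.snd_mem_divisors_of_mem_antidiagonal hx)))
    rfl rfl]

lemma ramanujanSum_gcd_of_dvd (n : ℕ) {q r : ℕ} (hq : q ∣ r) :
    ramanujanSum (Nat.gcd n r) q = ramanujanSum n q :=
  ramanujanSum_congr fun _ hb => by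
    rw [Nat.dvd_gcd_iff]
    exact ⟨And.left, fun h => ⟨h, hb.trans hq⟩⟩

lemma conj_ramanujanSum (n q : ℕ) : conj (ramanujanSum n q) = ramanujanSum n q := by
  rw [ramanujanSum_eq_sum_moebius]
  simp [apply_ite]

lemma ramanujanSum_eq_sum_expTwoPiI_neg (n q : ℕ) :
    ramanujanSum n q = ∑ k ∈ reducedResidues q, expTwoPiI (-(k * n / q)) := by
  rw [← conj_ramanujanSum, ramanujanSum_eq_sum_expTwoPiI, map_sum]
  refine sum_congr rfl fun k _ => ?_
  simpa using conj_expTwoPiI_ofReal (k * n / q)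

lemma intCast_mul_dvd_sub_iff {q q' k k' : ℕ} (hk : k ∈ reducedResidues q)
    (hk' : k' ∈ reducedResidues q') :
    ((q * q' : ℕ) : ℤ) ∣ k * q' - k' * q ↔ q = q' ∧ k = k' := by
  refine ⟨fun h => ?_, by rintro ⟨rfl, rfl⟩; simp⟩
  simp only [reducedResidues, mem_filter, mem_Icc] at hk hk'
  have hq_dvd : q ∣ q' := by
    have : (q : ℤ) ∣ k * q' := by
      simpa using (Int.natCast_dvd_natCast.mpr (dvd_mul_right q q')).trans h |>.add
        (dvd_mul_left (q : ℤ) k')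
    exact (Nat.Coprime.symm hk.2).dvd_of_dvd_mul_left (by exact_mod_cast this)
  have hq'_dvd : q' ∣ q := by
    have : (q' : ℤ) ∣ k' * q := by
      simpa using ((Int.natCast_dvd_natCast.mpr (dvd_mul_left q' q)).trans h).neg_right |>.add
        (dvd_mul_left (q' : ℤ) k)
    exact (Nat.Coprime.symm hk'.2).dvd_of_dvd_mul_left (by exact_mod_cast this)
  obtain rfl := Nat.dvd_antisymm hq_dvd hq'_dvd
  refine ⟨rfl, ?_⟩
  have hsub : (q : ℤ) ∣ k - k' := by
    rw [Nat.cast_mul, ← sub_mul] at h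
    exact (mul_dvd_mul_iff_right (by exact_mod_cast (by omega : q ≠ 0))).mp h
  have := Int.eq_zero_of_abs_lt_dvd hsub (by rw [abs_lt]; omega)
  omega

lemma sum_Icc_expTwoPiI_mul_expTwoPiI_neg {r q q' k k' : ℕ} (hq : q ∣ r) (hq' : q' ∣ r)
    (hk : k ∈ reducedResidues q) (hk' : k' ∈ reducedResidues q') :
    ∑ a ∈ Icc 1 r, expTwoPiI (k * a / q) * expTwoPiI (-(k' * a / q')) =
      if q = q' ∧ k = k' then (r : ℂ) else 0 := by
  have hq0 := ne_zero_of_mem_reducedResidues hk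
  have hq'0 := ne_zero_of_mem_reducedResidues hk'
  have hqC : (q : ℂ) ≠ 0 := Nat.cast_ne_zero.mpr hq0
  have hq'C : (q' : ℂ) ≠ 0 := Nat.cast_ne_zero.mpr hq'0
  set x : ℂ := ((k * q' - k' * q : ℤ) : ℂ) / ((q * q' : ℕ) : ℂ) with hx
  have hterm : ∀ a : ℕ, expTwoPiI (k * a / q) * expTwoPiI (-(k' * a / q')) =
      expTwoPiI (a * x) := fun a => by
    rw [← expTwoPiI_add, hx]
    congr 1
    push_cast
    field_simp
    ring
  have hrx : expTwoPiI (r * x) = 1 := by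
    obtain ⟨s, hs⟩ := hq
    obtain ⟨s', hs'⟩ := hq'
    rw [expTwoPiI_eq_one_iff]
    refine ⟨s * k - s' * k', ?_⟩
    have hsC : (r : ℂ) = q * s := by exact_mod_cast hs
    have hs'C : (r : ℂ) = q' * s' := by exact_mod_cast hs'
    rw [hx]
    push_cast
    field_simp
    linear_combination (k * q' : ℂ) * hsC - (k' * q : ℂ) * hs'C
  rw [sum_congr rfl fun a _ => hterm a, sum_Icc_expTwoPiI_natCast_mul hrx]
  simp only [hx, expTwoPiI_intCast_div_eq_one_iff _ (mul_ne_zero hq0 hq'0),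
    intCast_mul_dvd_sub_iff hk hk']

lemma sum_Icc_ramanujanSum_mul_ramanujanSum {r q q' : ℕ} (hq : q ∣ r) (hq' : q' ∣ r) :
    ∑ a ∈ Icc 1 r, ramanujanSum a q * ramanujanSum a q' =
      if q = q' then (r : ℂ) * φ q else 0 := by
  calc ∑ a ∈ Icc 1 r, ramanujanSum a q * ramanujanSum a q'
      = ∑ k ∈ reducedResidues q, ∑ k' ∈ reducedResidues q', ∑ a ∈ Icc 1 r,
          expTwoPiI (k * a / q) * expTwoPiI (-(k' * a / q')) := by
        simp_rw [ramanujanSum_eq_sum_expTwoPiI _ q, ramanujanSum_eq_sum_expTwoPiI_neg _ q',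
          sum_mul_sum]
        rw [sum_comm]
        exact sum_congr rfl fun _ _ => sum_comm
    _ = ∑ k ∈ reducedResidues q, ∑ k' ∈ reducedResidues q',
          if q = q' ∧ k = k' then (r : ℂ) else 0 :=
        sum_congr rfl fun _ hk => sum_congr rfl fun _ hk' =>
          sum_Icc_expTwoPiI_mul_expTwoPiI_neg hq hq' hk hk'
    _ = if q = q' then (r : ℂ) * φ q else 0 := by
        split_ifs with h
        · subst h
          simp [card_reducedResidues, mul_comm]
        · simp [h]

lemma sum_divisors_ramanujanSum_mul_ramanujanSum {r q q' : ℕ} (hr : r ≠ 0)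
    (hq : q ∈ r.divisors) (hq' : q' ∈ r.divisors) :
    ∑ e ∈ r.divisors, ramanujanSum (r / e) q * (φ e * ramanujanSum (r / e) q' / (r * φ q')) =
      if q = q' then 1 else 0 := by
  have hqr := Nat.dvd_of_mem_divisors hq
  have hq'r := Nat.dvd_of_mem_divisors hq'
  have hden : (r * φ q' : ℂ) ≠ 0 := mul_ne_zero (Nat.cast_ne_zero.mpr hr)
    (Nat.cast_ne_zero.mpr (Nat.totient_pos.mpr (Nat.pos_of_mem_divisors hq')).ne')
  calc ∑ e ∈ r.divisors, ramanujanSum (r / e) q * (φ e * ramanujanSum (r / e) q' / (r * φ q'))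
      = (∑ e ∈ r.divisors, φ e • (ramanujanSum (r / e) q * ramanujanSum (r / e) q')) /
          (r * φ q') := by
        rw [sum_div]
        refine sum_congr rfl fun e _ => ?_
        rw [nsmul_eq_mul]
        ring
    _ = (∑ a ∈ Icc 1 r, ramanujanSum a q * ramanujanSum a q') / (r * φ q') := by
        rw [← sum_Icc_comp_gcd r (fun d => ramanujanSum d q * ramanujanSum d q'),
          sum_congr rfl fun a _ => by
            rw [ramanujanSum_gcd_of_dvd a hqr, ramanujanSum_gcd_of_dvd a hq'r]]
    _ = if q = q' then 1 else 0 := by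
        rw [sum_Icc_ramanujanSum_mul_ramanujanSum hqr hq'r]
        split_ifs with h
        · rw [h, div_self hden]
        · rw [zero_div]

/-- Every `r`-even function `f` has the Ramanujan–Fourier expansion
`f(n) = ∑_{q ∣ r} h(q) c(n,q)` with
`h(q) = (1/(r φ(q))) ∑_{e ∣ r} φ(e) f(r/e) c(r/e, q)`. -/
theorem even_fourier_expansion (r : ℕ) (hr : 0 < r) (f : ℕ → ℂ)
    (hf : ∀ n : ℕ, 0 < n → f n = f (Nat.gcd n r)) :
    ∀ n : ℕ, 0 < n →
      f n = ∑ q ∈ r.divisors,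
        ((1 / ((r : ℂ) * (Nat.totient q : ℂ))) *
          ∑ e ∈ r.divisors, (Nat.totient e : ℂ) * f (r / e) * ramanujanSum (r / e) q) *
          ramanujanSum n q := by
  intro n hn
  set e₀ := r / Nat.gcd n r
  have he₀ : e₀ ∈ r.divisors :=
    Nat.mem_divisors.mpr ⟨Nat.div_dvd_of_dvd (Nat.gcd_dvd_right n r), hr.ne'⟩
  have hr_div_e₀ : r / e₀ = Nat.gcd n r := Nat.div_div_self (Nat.gcd_dvd_right n r) hr.ne'
  have hc : ∀ q ∈ r.divisors, ramanujanSum n q = ramanujanSum (r / e₀) q := fun q hq => by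
    rw [hr_div_e₀, ramanujanSum_gcd_of_dvd n (Nat.dvd_of_mem_divisors hq)]
  have hdual := sum_mul_eq_ite_of_sum_mul_eq_ite
    (fun q hq q' hq' => sum_divisors_ramanujanSum_mul_ramanujanSum hr.ne' hq hq')
  calc f n = ∑ e ∈ r.divisors, f (r / e) * if e = e₀ then 1 else 0 := by
        simp [he₀, hr_div_e₀, ← hf n hn]
    _ = ∑ e ∈ r.divisors, f (r / e) * ∑ q ∈ r.divisors,
          φ e * ramanujanSum (r / e) q / (r * φ q) * ramanujanSum (r / e₀) q :=
        sum_congr rfl fun e he => by rw [hdual e he e₀ he₀]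
    _ = _ := by
        simp_rw [mul_sum, sum_mul]
        rw [sum_comm]
        refine sum_congr rfl fun q hq => sum_congr rfl fun e _ => ?_
        rw [hc q hq]
        ring
end

section
/- Let s and n be positive integers with gcd(s,n) = 1, and for each positive integer d let φ(s,d,n) = #{k : 1 ≤ k ≤ n and gcd(s + (k−1)d, n) = 1}. Then the mean value M(φ(s,·,n)) of the function d ↦ φ(s,d,n) exists and equals n · Π_{p | n} (1 − 1/p + 1/p²), the product being over the prime divisors p of n. -/
/-!
The function `d ↦ φ(s,d,n)` is `n`-periodic, so its mean value is its average over one period,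
`n⁻¹ · #{(j, d) mod n : gcd(s + j d, n) = 1}`. Möbius inversion over the divisors `e ∣ n` turns this
count into `∑_{e ∣ n} μ(e) · #{(j, d) mod n : j d ≡ -s mod e}`; since `-s` is a unit modulo `e`,
the congruence has `φ(e)` solutions modulo `e`, hence `φ(e) (n/e)²` modulo `n`. The remaining
sum `∑_{e ∣ n} μ(e) φ(e) / e²` is multiplicative and equals `∏_{p ∣ n} (1 - (p - 1) / p²)`.
-/

open Finset Filter Topology ArithmeticFunction
open scoped ArithmeticFunction.Moebius

theorem sum_divisors_filter_dvd_moebius (m : ℕ) {n : ℕ} (hn : n ≠ 0) :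
    ∑ e ∈ n.divisors with e ∣ m, μ e = if m.Coprime n then 1 else 0 := by
  have hdiv : {e ∈ n.divisors | e ∣ m} = (m.gcd n).divisors := by
    ext e
    simp [Nat.dvd_gcd_iff, hn, Nat.gcd_ne_zero_right hn, and_comm]
  rw [hdiv, ← coe_mul_zeta_apply, moebius_mul_coe_zeta, one_apply]

theorem card_filter_coprime_eq_sum_moebius {α : Type*} (A : Finset α) (f : α → ℕ) {n : ℕ}
    (hn : n ≠ 0) :
    (#{x ∈ A | (f x).Coprime n} : ℤ) = ∑ e ∈ n.divisors, μ e * #{x ∈ A | e ∣ f x} := by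
  simp_rw [card_filter, Nat.cast_sum, Nat.cast_ite, Nat.cast_one, Nat.cast_zero, mul_sum,
    mul_ite, mul_one, mul_zero]
  rw [sum_comm]
  refine sum_congr rfl fun x _ => ?_
  rw [← sum_divisors_filter_dvd_moebius (f x) hn, sum_filter]

theorem ArithmeticFunction.IsMultiplicative.sum_divisors_moebius_mul {R : Type*} [CommRing R]
    {f : ArithmeticFunction R} (hf : f.IsMultiplicative) {n : ℕ} (hn : n ≠ 0) :
    ∑ d ∈ n.divisors, μ d * f d = ∏ p ∈ n.primeFactors, (1 - f p) := by
  rw [← Nat.primeFactors_radical, hf.prodPrimeFactors_one_sub_of_squarefree f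
    UniqueFactorizationMonoid.squarefree_radical]
  refine (sum_subset (Nat.divisors_subset_of_dvd hn UniqueFactorizationMonoid.radical_dvd_self)
    fun d hd hdr => ?_).symm
  have hnsq : ¬Squarefree d := fun hsq => hdr <| Nat.mem_divisors.2
    ⟨(UniqueFactorizationMonoid.dvd_radical_iff hsq.isRadical hn).2 (Nat.dvd_of_mem_divisors hd),
      UniqueFactorizationMonoid.radical_ne_zero⟩
  simp [moebius_eq_zero_of_not_squarefree hnsq]

noncomputable def totientDivSq : ArithmeticFunction ℝ :=
  ⟨fun e => e.totient / (e : ℝ) ^ 2, by simp⟩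

theorem totientDivSq_apply (e : ℕ) : totientDivSq e = e.totient / (e : ℝ) ^ 2 := rfl

theorem isMultiplicative_totientDivSq : totientDivSq.IsMultiplicative := by
  refine ⟨by simp [totientDivSq_apply], fun {m n} hmn => ?_⟩
  simp only [totientDivSq_apply, Nat.totient_mul hmn, Nat.cast_mul, mul_pow, mul_div_mul_comm]

theorem card_filter_mul_eq_card_units {M : Type*} [CommMonoid M] [Fintype M] [DecidableEq M]
    [Fintype Mˣ] {c : M} (hc : IsUnit c) :
    #{q : M × M | q.1 * q.2 = c} = Fintype.card Mˣ := by
  obtain ⟨c, rfl⟩ := hc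
  have himage : ({q : M × M | q.1 * q.2 = c} : Finset (M × M)) =
      univ.image fun u : Mˣ => ((u : M), ((u⁻¹ * c : Mˣ) : M)) := by
    ext ⟨x, y⟩
    simp only [mem_filter, mem_univ, true_and, mem_image, Prod.mk.injEq]
    constructor
    · intro h
      obtain ⟨u, rfl⟩ := isUnit_of_mul_isUnit_left (h ▸ c.isUnit : IsUnit (x * y))
      exact ⟨u, rfl, by simp [← h]⟩
    · rintro ⟨u, rfl, rfl⟩
      simp
  rw [himage, card_image_of_injective _ fun u v h => Units.ext (congrArg Prod.fst h), card_univ]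

theorem card_filter_range_natCast_eq {e n : ℕ} [NeZero e] (h : e ∣ n) (x : ZMod e) :
    #{j ∈ range n | ((j : ℕ) : ZMod e) = x} = n / e := by
  have hmod (j : ℕ) : (j : ZMod e) = x ↔ j ≡ x.val [MOD e] := by
    rw [← ZMod.natCast_eq_natCast_iff, ZMod.natCast_zmod_val]
  simp_rw [hmod, ← Nat.count_eq_card_filter_range, Nat.count_modEq_card _ (NeZero.pos e),
    Nat.mod_eq_zero_of_dvd h]
  simp

theorem card_filter_range_prod_natCast_mem {e n : ℕ} [NeZero e] (h : e ∣ n)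
    (T : Finset (ZMod e × ZMod e)) :
    #{p ∈ range n ×ˢ range n | ((p.1 : ZMod e), (p.2 : ZMod e)) ∈ T} = #T * (n / e) ^ 2 := by
  set S := {p ∈ range n ×ˢ range n | ((p.1 : ZMod e), (p.2 : ZMod e)) ∈ T}
  rw [card_eq_sum_card_fiberwise (f := fun p => ((p.1 : ZMod e), (p.2 : ZMod e))) (s := S) (t := T)
    fun p hp => (mem_filter.1 hp).2, sum_const_nat fun q hq => ?_]
  rw [sq]
  nth_rw 1 [← card_filter_range_natCast_eq h q.1]
  rw [← card_filter_range_natCast_eq h q.2, ← card_product, ← filter_product]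
  congr 1
  ext p
  simp only [mem_filter, Prod.ext_iff]
  grind

theorem card_filter_range_prod_dvd_add_mul {s e n : ℕ} (h : e ∣ n) (hs : s.Coprime e) :
    #{p ∈ range n ×ˢ range n | e ∣ s + p.1 * p.2} = e.totient * (n / e) ^ 2 := by
  rcases eq_or_ne e 0 with rfl | he
  · simp [zero_dvd_iff.1 h]
  have : NeZero e := ⟨he⟩
  have hdvd (a b : ℕ) : e ∣ s + a * b ↔ ((a : ZMod e), (b : ZMod e)) ∈
      ({q : ZMod e × ZMod e | q.1 * q.2 = -s} : Finset _) := by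
    simp [← ZMod.natCast_eq_zero_iff, eq_neg_iff_add_eq_zero, add_comm]
  simp_rw [hdvd, card_filter_range_prod_natCast_mem h, card_filter_mul_eq_card_units
    ((ZMod.isUnit_iff_coprime s e).2 hs).neg, ZMod.card_units_eq_totient]

theorem card_filter_range_prod_coprime_add_mul {s n : ℕ} (hn : n ≠ 0) (hsn : s.Coprime n) :
    (#{p ∈ range n ×ˢ range n | (s + p.1 * p.2).Coprime n} : ℝ) =
      n ^ 2 * ∏ p ∈ n.primeFactors, (1 - 1 / (p : ℝ) + 1 / (p : ℝ) ^ 2) := by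
  have hmoebius := card_filter_coprime_eq_sum_moebius (range n ×ˢ range n)
    (fun p => s + p.1 * p.2) hn
  calc (#{p ∈ range n ×ˢ range n | (s + p.1 * p.2).Coprime n} : ℝ)
      = ∑ e ∈ n.divisors, (μ e : ℝ) * (e.totient * ((n / e : ℕ) : ℝ) ^ 2) := by
        rw [← Int.cast_natCast, hmoebius]
        push_cast
        refine sum_congr rfl fun e he => ?_
        rw [card_filter_range_prod_dvd_add_mul (Nat.dvd_of_mem_divisors he)
          (hsn.coprime_dvd_right (Nat.dvd_of_mem_divisors he))]
        push_cast
        rfl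
    _ = n ^ 2 * ∑ e ∈ n.divisors, (μ e : ℝ) * totientDivSq e := by
        rw [mul_sum]
        refine sum_congr rfl fun e he => ?_
        have he0 : (e : ℝ) ≠ 0 := Nat.cast_ne_zero.2 (Nat.pos_of_mem_divisors he).ne'
        rw [totientDivSq_apply, Nat.cast_div (Nat.dvd_of_mem_divisors he) he0]
        field_simp
    _ = n ^ 2 * ∏ p ∈ n.primeFactors, (1 - 1 / (p : ℝ) + 1 / (p : ℝ) ^ 2) := by
        rw [isMultiplicative_totientDivSq.sum_divisors_moebius_mul hn]
        refine congrArg _ (prod_congr rfl fun p hp => ?_)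
        have hp := Nat.prime_of_mem_primeFactors hp
        have hp0 : (p : ℝ) ≠ 0 := Nat.cast_ne_zero.2 hp.ne_zero
        rw [totientDivSq_apply, Nat.totient_prime hp, Nat.cast_pred hp.pos]
        field_simp
        ring

theorem Function.Periodic.sum_range_mul_add {M : Type*} [AddCommMonoid M] {g : ℕ → M} {n : ℕ}
    (hg : Function.Periodic g n) (q r : ℕ) :
    ∑ j ∈ range (n * q + r), g j = q • ∑ j ∈ range n, g j + ∑ j ∈ range r, g j := by
  have hshift (k m : ℕ) : ∑ j ∈ range m, g (n * k + j) = ∑ j ∈ range m, g j :=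
    sum_congr rfl fun j _ => by rw [add_comm, mul_comm]; exact hg.nat_mul k j
  have hmul (k : ℕ) : ∑ j ∈ range (n * k), g j = k • ∑ j ∈ range n, g j := by
    induction k with
    | zero => simp
    | succ k ih => rw [mul_add_one, sum_range_add, ih, hshift, succ_nsmul]
  rw [sum_range_add, hmul, hshift]

theorem Function.Periodic.tendsto_sum_range_floor_div {g : ℕ → ℝ} {n : ℕ}
    (hg : Function.Periodic g n) (hn : 0 < n) :
    Tendsto (fun x : ℝ => (∑ j ∈ range ⌊x⌋₊, g j) / x) atTop
      (𝓝 ((∑ j ∈ range n, g j) / n)) := by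
  set a := (∑ j ∈ range n, g j) / n
  set E : ℕ → ℝ := fun m => ∑ j ∈ range m, g j - m * a
  -- The error term `E` is `n`-periodic, hence bounded.
  have hE (m : ℕ) : E m = E (m % n) := by
    have hsplit := hg.sum_range_mul_add (m / n) (m % n)
    rw [Nat.div_add_mod] at hsplit
    have hm : (m : ℝ) = n * (m / n : ℕ) + (m % n : ℕ) := by
      exact_mod_cast (Nat.div_add_mod m n).symm
    simp only [E, hsplit, hm, nsmul_eq_mul, a]
    field_simp
    ring
  set C := ∑ r ∈ range n, |E r|
  have hbound (m : ℕ) : |E m| ≤ C := by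
    rw [hE]
    exact single_le_sum (fun r _ => abs_nonneg (E r)) (mem_range.2 (Nat.mod_lt m hn))
  have hErr : Tendsto (fun x : ℝ => E ⌊x⌋₊ / x) atTop (𝓝 0) := by
    refine squeeze_zero_norm' ?_ (tendsto_const_nhds (x := C) |>.div_atTop tendsto_id)
    filter_upwards [eventually_gt_atTop 0] with x hx
    rw [norm_div, Real.norm_of_nonneg hx.le]
    exact div_le_div_of_nonneg_right (hbound _) hx.le
  have hmain := (tendsto_nat_floor_div_atTop.mul_const a).add hErr
  rw [one_mul, add_zero] at hmain
  refine hmain.congr' ?_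
  filter_upwards [eventually_gt_atTop 0] with x hx
  simp only [E]
  field_simp
  ring

theorem Finset.sum_Icc_one_eq_sum_range {M : Type*} [AddCommMonoid M] (f : ℕ → M) (m : ℕ) :
    ∑ d ∈ Icc 1 m, f d = ∑ j ∈ range m, f (j + 1) := by
  rw [← Ico_add_one_right_eq_Icc, sum_Ico_eq_sum_range]
  simp [add_comm]

theorem meanValue_maxsein_general (s n : ℕ) (hn : 0 < n) (hsn : Nat.gcd s n = 1) :
    Tendsto
      (fun x : ℝ =>
        (∑ d ∈ Finset.Icc 1 ⌊x⌋₊,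
          (((Finset.Icc 1 n).filter (fun k => Nat.gcd (s + (k - 1) * d) n = 1)).card : ℝ)) / x)
      atTop
      (𝓝 ((n : ℝ) * ∏ p ∈ n.primeFactors, (1 - 1 / (p : ℝ) + 1 / (p : ℝ) ^ 2))) := by
  set F : ℕ → ℝ := fun d => #{k ∈ Icc 1 n | Nat.gcd (s + (k - 1) * d) n = 1}
  have hF : Function.Periodic F n := fun d => by
    simp only [F, mul_add, ← add_assoc, ← mul_comm n, Nat.coprime_add_mul_left_left]
  have hF' : Function.Periodic (fun j => F (j + 1)) n := fun j => by
    simp only [add_right_comm j n 1, hF _]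
  have hshift : ∑ j ∈ range n, F (j + 1) = ∑ d ∈ range n, F d := by
    have h := sum_range_succ' F n
    rw [sum_range_succ, hF.eq] at h
    exact (add_right_cancel h).symm
  have hcount :
      ∑ d ∈ range n, F d = #{p ∈ range n ×ˢ range n | (s + p.1 * p.2).Coprime n} := by
    simp only [F, card_filter, sum_Icc_one_eq_sum_range, Nat.add_sub_cancel, sum_product_right]
    push_cast
    rfl
  have hlim := hF'.tendsto_sum_range_floor_div hn
  rw [hshift, hcount, card_filter_range_prod_coprime_add_mul hn.ne' hsn] at hlim
  convert hlim using 2 with x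
  · rw [sum_Icc_one_eq_sum_range]
  · field_simp

/-- For `gcd(s,n) = 1`, the mean value of `d ↦ φ(s,d,n) = #{1 ≤ k ≤ n : gcd(s+(k−1)d, n) = 1}`
exists and equals `n ∏_{p ∣ n} (1 − 1/p + 1/p²)`. -/
theorem meanValue_maxsein (s n : ℕ) (hs : 0 < s) (hn : 0 < n) (hsn : Nat.gcd s n = 1) :
    Tendsto
      (fun x : ℝ =>
        (∑ d ∈ Finset.Icc 1 ⌊x⌋₊,
          (((Finset.Icc 1 n).filter (fun k => Nat.gcd (s + (k - 1) * d) n = 1)).card : ℝ)) / x)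
      atTop
      (𝓝 ((n : ℝ) * ∏ p ∈ n.primeFactors, (1 - 1 / (p : ℝ) + 1 / (p : ℝ) ^ 2))) :=
  meanValue_maxsein_general s n hn hsn
end

section
/- Let p be a prime and define f, g : ℕ+ → ℕ by f(n) = p if p | n and f(n) = 1 otherwise, and g(n) = p² if p² | n and g(n) = 1 otherwise (so f(n) = (n,p)_U and g(n) = (n,p²)_U). Then for every positive integer r there exists a positive integer n such that f(n) + g(n) ≠ f((n,r)_U) + g((n,r)_U); that is, the sum f + g is not a U-even function (mod r) for any r. -/
/-! Only the `p`-part of `r` matters: if `v = v_p(r)`, the unitary divisors of `r` dividing `p ^ k`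
are `1` and, when `v ≤ k`, `p ^ v`. So for `v = 1` the point `n = p²` is sent to `p`, and otherwise
`n = p` is sent to `1`; in both cases `f + g` changes value. -/

open Finset

/-- The unitary gcd `(n,r)_U`: the largest `d` with `d ∣ n`, `d ∣ r` and `gcd(d, r/d) = 1`. -/
def unitaryGcd (n r : ℕ) : ℕ :=
  (r.divisors.filter (fun d => d ∣ n ∧ Nat.Coprime d (r / d))).sup id

theorem unitaryGcd_eq_of_isGreatest {n r d : ℕ} (hr : r ≠ 0) (hdn : d ∣ n) (hdr : d ∣ r)
    (hcop : Nat.Coprime d (r / d))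
    (hmax : ∀ e, e ∣ n → e ∣ r → Nat.Coprime e (r / e) → e ≤ d) :
    unitaryGcd n r = d := by
  unfold unitaryGcd
  refine le_antisymm (Finset.sup_le fun e he => ?_) (Finset.le_sup (f := id) ?_)
  · simp only [mem_filter, Nat.mem_divisors] at he
    exact hmax e he.2.1 he.1.1 he.2.2
  · simp only [mem_filter, Nat.mem_divisors]
    exact ⟨⟨hdr, hr⟩, hdn, hcop⟩

theorem not_coprime_prime_pow_div_of_lt_factorization {p r i : ℕ} (hp : p.Prime) (hr : r ≠ 0)
    (hi : 0 < i) (hiv : i < r.factorization p) : ¬ Nat.Coprime (p ^ i) (r / p ^ i) := by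
  rw [Nat.coprime_pow_left_iff hi, hp.coprime_iff_not_dvd, not_not,
    Nat.dvd_div_iff_mul_dvd ((hp.pow_dvd_iff_le_factorization hr).mpr hiv.le), ← pow_succ,
    hp.pow_dvd_iff_le_factorization hr]
  exact hiv

theorem unitaryGcd_prime_pow {p r : ℕ} (hp : p.Prime) (hr : r ≠ 0) (k : ℕ) :
    unitaryGcd (p ^ k) r = if r.factorization p ≤ k then p ^ r.factorization p else 1 := by
  set v := r.factorization p
  split_ifs with hvk
  · refine unitaryGcd_eq_of_isGreatest hr (pow_dvd_pow p hvk) (Nat.ordProj_dvd r p)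
      ((Nat.coprime_ordCompl hp hr).pow_left v) fun e hek her _ => ?_
    obtain ⟨i, -, rfl⟩ := (Nat.dvd_prime_pow hp).mp hek
    exact Nat.pow_le_pow_right hp.pos ((hp.pow_dvd_iff_le_factorization hr).mp her)
  · refine unitaryGcd_eq_of_isGreatest hr (one_dvd _) (one_dvd _) (Nat.coprime_one_left _)
      fun e hek _ hcop => ?_
    obtain ⟨i, hik, rfl⟩ := (Nat.dvd_prime_pow hp).mp hek
    rcases Nat.eq_zero_or_pos i with rfl | hi
    · simp
    · exact absurd hcop (not_coprime_prime_pow_div_of_lt_factorization hp hr hi (by omega))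

/-- For a prime `p`, with `f(n) = (n,p)_U` and `g(n) = (n,p²)_U`, the sum `f + g` is not a
`U`-even function (mod `r`) for any positive integer `r`. -/
theorem sum_not_unitary_even (p : ℕ) (hp : p.Prime)
    (f g : ℕ → ℕ)
    (hf : ∀ n : ℕ, f n = if p ∣ n then p else 1)
    (hg : ∀ n : ℕ, g n = if p ^ 2 ∣ n then p ^ 2 else 1) :
    ∀ r : ℕ, 0 < r → ∃ n : ℕ, 0 < n ∧
      f n + g n ≠ f (unitaryGcd n r) + g (unitaryGcd n r) := by
  intro r hr
  have hp1 : 1 < p := hp.one_lt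
  have hsq_not_dvd : ¬ p ^ 2 ∣ p := fun h => by nlinarith [Nat.le_of_dvd hp.pos h]
  have hp_not_dvd_one : ¬ p ∣ 1 := hp.not_dvd_one
  have h_one : f 1 + g 1 = 2 := by
    rw [hf, hg, if_neg hp_not_dvd_one,
      if_neg fun h => hp_not_dvd_one ((dvd_pow_self p two_ne_zero).trans h)]
  have h_p : f p + g p = p + 1 := by rw [hf, hg, if_pos dvd_rfl, if_neg hsq_not_dvd]
  have h_sq : f (p ^ 2) + g (p ^ 2) = p + p ^ 2 := by
    rw [hf, hg, if_pos (dvd_pow_self p two_ne_zero), if_pos dvd_rfl]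
  have hunit := unitaryGcd_prime_pow hp hr.ne'
  by_cases hv : r.factorization p = 1
  · refine ⟨p ^ 2, by positivity, ?_⟩
    rw [hunit, if_pos (by omega), hv, pow_one, h_sq, h_p]
    nlinarith
  · refine ⟨p, hp.pos, ?_⟩
    have hone : unitaryGcd p r = 1 := by
      rw [← pow_one p, hunit]
      split_ifs with h
      · rw [show r.factorization p = 0 by omega, pow_zero]
      · rfl
    rw [hone, h_p, h_one]
    omega
end

section
/- For all positive integers n and r, c*(n,r) = Σ_{d | r, rad(r) | d} c(n,d), the sum being over the positive divisors d of r that are divisible by the radical rad(r) of r (the product of the distinct prime divisors of r). -/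
open Finset

/-- The unitary Ramanujan sum `c*(n,r) = ∑_{1 ≤ k ≤ r, (k,r)_U = 1} exp(2πikn/r)`. -/
noncomputable def unitaryRamanujanSum (n r : ℕ) : ℂ :=
  ∑ k ∈ (Finset.Icc 1 r).filter (fun k => unitaryGcd k r = 1),
    Complex.exp (2 * Real.pi * Complex.I * k * n / r)

/-- The radical of `r`: the product of the distinct prime divisors of `r`. -/
def rad (r : ℕ) : ℕ := ∏ p ∈ r.primeFactors, p

lemma rad_dvd_iff {r m : ℕ} : rad r ∣ m ↔ ∀ p ∈ r.primeFactors, p ∣ m := by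
  constructor
  · intro h p hp
    exact (Finset.dvd_prod_of_mem id hp).trans h
  · intro h
    exact Finset.prod_primes_dvd m
      (fun p hp => (Nat.prime_of_mem_primeFactors hp).prime) h

lemma unitaryGcd_eq_one_iff {k r : ℕ} (hk : 0 < k) (hr : 0 < r) :
    unitaryGcd k r = 1 ↔ rad r ∣ r / Nat.gcd k r := by
  have hg : Nat.gcd k r ∣ r := Nat.gcd_dvd_right k r
  have hg0 : 0 < Nat.gcd k r := Nat.gcd_pos_of_pos_left r hk
  have hrg0 : 0 < r / Nat.gcd k r := Nat.div_pos (Nat.le_of_dvd hr hg) hg0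
  constructor
  · intro h
    rw [rad_dvd_iff]
    intro p hp
    have hp' := Nat.prime_of_mem_primeFactors hp
    have hpr : p ∣ r := Nat.dvd_of_mem_primeFactors hp
    set v := r.factorization p with hv
    have hv1 : 1 ≤ v := (Nat.Prime.factorization_pos_of_dvd hp' hr.ne' hpr)
    have hqk : ¬ p ^ v ∣ k := by
      intro hdvd
      have hmem : p ^ v ∈ r.divisors.filter (fun d => d ∣ k ∧ Nat.Coprime d (r / d)) := by
        simp only [Finset.mem_filter, Nat.mem_divisors]
        exact ⟨⟨Nat.ordProj_dvd r p, hr.ne'⟩, hdvd,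
          Nat.Coprime.pow_left _ (Nat.coprime_ordCompl hp' hr.ne')⟩
      have hle : id (p ^ v) ≤ unitaryGcd k r := Finset.le_sup hmem
      rw [h] at hle
      have : p ≤ p ^ v := Nat.le_self_pow (by omega) p
      have := hp'.two_le
      simp only [id] at hle
      omega
    rw [hp'.pow_dvd_iff_le_factorization hk.ne'] at hqk
    have hminle : (Nat.gcd k r).factorization p < v := by
      rw [Nat.factorization_gcd hk.ne' hr.ne']
      simp only [Finsupp.inf_apply]
      omega
    rw [hp'.dvd_iff_one_le_factorization hrg0.ne', Nat.factorization_div hg,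
      Finsupp.tsub_apply]
    omega
  · intro h
    apply le_antisymm
    · apply Finset.sup_le
      intro d hd
      simp only [Finset.mem_filter, Nat.mem_divisors] at hd
      obtain ⟨⟨hdr, _⟩, hdk, hcop⟩ := hd
      have hd0 : 0 < d := Nat.pos_of_dvd_of_pos hdr hr
      by_contra hd1
      simp only [id, not_le] at hd1
      obtain ⟨p, hp, hpd⟩ := Nat.exists_prime_and_dvd (n := d) (by omega)
      have hpr : p ∣ r := hpd.trans hdr
      have hrd0 : 0 < r / d := Nat.div_pos (Nat.le_of_dvd hr hdr) hd0
      have hprd : ¬ p ∣ r / d := by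
        intro hc
        exact hp.one_lt.ne' (Nat.eq_one_of_dvd_one (hcop ▸ Nat.dvd_gcd hpd hc))
      have hfrd : (r / d).factorization p = 0 :=
        Nat.factorization_eq_zero_of_not_dvd hprd
      have hrdd : d * (r / d) = r := Nat.mul_div_cancel' hdr
      have hfr : r.factorization p = d.factorization p := by
        rw [← hrdd, Nat.factorization_mul hd0.ne' hrd0.ne', Finsupp.add_apply, hfrd, add_zero]
      have hfd1 : 1 ≤ d.factorization p :=
        (Nat.Prime.factorization_pos_of_dvd hp hd0.ne' hpd)
      have hfk : d.factorization p ≤ k.factorization p := by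
        have := (Nat.factorization_le_iff_dvd hd0.ne' hk.ne').2 hdk
        exact this p
      have hpg : p ∣ r / Nat.gcd k r := rad_dvd_iff.mp h p (Nat.mem_primeFactors.mpr ⟨hp, hpr, hr.ne'⟩)
      rw [hp.dvd_iff_one_le_factorization hrg0.ne', Nat.factorization_div hg,
        Finsupp.tsub_apply, Nat.factorization_gcd hk.ne' hr.ne', Finsupp.inf_apply] at hpg
      omega
    · have h1 : (1 : ℕ) ∈ r.divisors.filter (fun d => d ∣ k ∧ Nat.Coprime d (r / d)) := by
        simp [Nat.mem_divisors, hr.ne']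
      exact Finset.le_sup (f := id) h1

/-- The unitary Ramanujan sum `c*(n,r) = ∑_{1 ≤ k ≤ r, (k,r)_U = 1} exp(2πikn/r)`. -/
theorem unitaryRamanujanSum_eq_sum_ramanujanSum (n r : ℕ) (hn : 0 < n) (hr : 0 < r) :
    unitaryRamanujanSum n r =
      ∑ d ∈ r.divisors.filter (fun d => rad r ∣ d), ramanujanSum n d := by
  unfold unitaryRamanujanSum ramanujanSum
  rw [Finset.sum_sigma']
  symm
  apply Finset.sum_nbij' (i := fun x : Σ _ : ℕ, ℕ => x.2 * (r / x.1))
    (j := fun k => ⟨r / Nat.gcd k r, k / Nat.gcd k r⟩)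
  · rintro ⟨d, c⟩ hx
    simp only [Finset.mem_sigma, Finset.mem_filter, Nat.mem_divisors, Finset.mem_Icc] at hx
    obtain ⟨⟨⟨hdr, _⟩, hrad⟩, ⟨hc1, hcd⟩, hgcd⟩ := hx
    have hd0 : 0 < d := Nat.pos_of_dvd_of_pos hdr hr
    have hrd0 : 0 < r / d := Nat.div_pos (Nat.le_of_dvd hr hdr) hd0
    have hk0 : 0 < c * (r / d) := Nat.mul_pos (by omega) hrd0
    have hrdd : d * (r / d) = r := Nat.mul_div_cancel' hdr
    have hg : Nat.gcd (c * (r / d)) r = r / d := by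
      have h2 : Nat.gcd (c * (r / d)) (d * (r / d)) = r / d := by
        rw [Nat.gcd_mul_right, hgcd, one_mul]
      rwa [hrdd] at h2
    simp only [Finset.mem_filter, Finset.mem_Icc]
    refine ⟨⟨hk0, ?_⟩, ?_⟩
    · calc c * (r / d) ≤ d * (r / d) := Nat.mul_le_mul_right _ hcd
        _ = r := hrdd
    · rw [unitaryGcd_eq_one_iff hk0 hr, hg, Nat.div_div_self hdr hr.ne']
      exact hrad
  · intro k hk
    simp only [Finset.mem_filter, Finset.mem_Icc] at hk
    obtain ⟨⟨hk1, hkr⟩, hu⟩ := hk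
    have hk0 : 0 < k := hk1
    have hg : Nat.gcd k r ∣ r := Nat.gcd_dvd_right k r
    have hgk : Nat.gcd k r ∣ k := Nat.gcd_dvd_left k r
    have hg0 : 0 < Nat.gcd k r := Nat.gcd_pos_of_pos_left r hk0
    simp only [Finset.mem_sigma, Finset.mem_filter, Nat.mem_divisors, Finset.mem_Icc]
    refine ⟨⟨⟨Nat.div_dvd_of_dvd hg, hr.ne'⟩, (unitaryGcd_eq_one_iff hk0 hr).mp hu⟩,
      ⟨Nat.div_pos (Nat.le_of_dvd hk0 hgk) hg0, Nat.div_le_div_right hkr⟩,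
      Nat.coprime_div_gcd_div_gcd hg0⟩
  · rintro ⟨d, c⟩ hx
    simp only [Finset.mem_sigma, Finset.mem_filter, Nat.mem_divisors, Finset.mem_Icc] at hx
    obtain ⟨⟨⟨hdr, _⟩, hrad⟩, ⟨hc1, hcd⟩, hgcd⟩ := hx
    have hd0 : 0 < d := Nat.pos_of_dvd_of_pos hdr hr
    have hrd0 : 0 < r / d := Nat.div_pos (Nat.le_of_dvd hr hdr) hd0
    have hrdd : d * (r / d) = r := Nat.mul_div_cancel' hdr
    have hg : Nat.gcd (c * (r / d)) r = r / d := by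
      have h2 : Nat.gcd (c * (r / d)) (d * (r / d)) = r / d := by
        rw [Nat.gcd_mul_right, hgcd, one_mul]
      rwa [hrdd] at h2
    simp only [hg]
    congr 1
    · exact Nat.div_div_self hdr hr.ne'
    · rw [Nat.mul_div_cancel _ hrd0]
  · intro k hk
    simp only [Finset.mem_filter, Finset.mem_Icc] at hk
    obtain ⟨⟨hk1, hkr⟩, hu⟩ := hk
    have hg : Nat.gcd k r ∣ r := Nat.gcd_dvd_right k r
    have hgk : Nat.gcd k r ∣ k := Nat.gcd_dvd_left k r
    have hg0 : 0 < Nat.gcd k r := Nat.gcd_pos_of_pos_left r hk1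
    simp only
    rw [Nat.div_div_self hg hr.ne', Nat.div_mul_cancel hgk]
  · rintro ⟨d, c⟩ hx
    simp only [Finset.mem_sigma, Finset.mem_filter, Nat.mem_divisors, Finset.mem_Icc] at hx
    obtain ⟨⟨⟨hdr, _⟩, hrad⟩, ⟨hc1, hcd⟩, hgcd⟩ := hx
    have hd0 : 0 < d := Nat.pos_of_dvd_of_pos hdr hr
    have hd0' : (d : ℂ) ≠ 0 := Nat.cast_ne_zero.mpr hd0.ne'
    have hr0' : (r : ℂ) ≠ 0 := Nat.cast_ne_zero.mpr hr.ne'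
    have hc' : ((r / d : ℕ) : ℂ) * (d : ℂ) = (r : ℂ) := by
      exact_mod_cast congrArg (Nat.cast : ℕ → ℂ) (Nat.div_mul_cancel hdr)
    simp only
    congr 1
    rw [div_eq_div_iff hd0' hr0']
    push_cast
    linear_combination (-2 * (Real.pi : ℂ) * Complex.I * c * n) * hc'
end
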